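/- Let A and B be (associative, unital) algebras over a commutative ring k and let ψ : B ⊗ A → A ⊗ B be a k-linear map. Define on A ⊗ B the multiplication (a ⊗ b)(a' ⊗ b') = (m_A ⊗ m_B)(id_A ⊗ ψ ⊗ id_B)(a ⊗ b ⊗ a' ⊗ b') and unit 1_A ⊗ 1_B. Then this multiplication is associative with unit 1_A ⊗ 1_B if and only if the following four conditions hold: (a) ψ ∘ (m_B ⊗ id_A) = (id_A ⊗ m_B) ∘ (ψ ⊗ id_B) ∘ (id_B ⊗ ψ); (b) ψ ∘ (id_B ⊗ m_A) = (m_A ⊗ id_B) ∘ (id_A ⊗ ψ) ∘ (ψ ⊗ id_A); (c) ψ(b ⊗ 1_A) = 1_A ⊗ b for all b ∈ B; (d) ψ(1_B ⊗ a) = a ⊗ 1_B for all a ∈ A. -/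
import Mathlib


open TensorProduct

variable {k A B : Type*} [CommRing k] [Ring A] [Ring B] [Algebra k A] [Algebra k B]

/-- The cross product multiplication on `A ⊗ B` induced by `ψ : B ⊗ A → A ⊗ B`. -/
noncomputable def crossMul (ψ : B ⊗[k] A →ₗ[k] A ⊗[k] B) :
    (A ⊗[k] B) ⊗[k] (A ⊗[k] B) →ₗ[k] A ⊗[k] B :=
  TensorProduct.map (LinearMap.mul' k A) (LinearMap.mul' k B) ∘ₗ
    (TensorProduct.assoc k (A ⊗[k] A) B B).toLinearMap ∘ₗ
    TensorProduct.map
      ((TensorProduct.assoc k A A B).symm.toLinearMap ∘ₗ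
        TensorProduct.map (LinearMap.id : A →ₗ[k] A) ψ ∘ₗ
        (TensorProduct.assoc k A B A).toLinearMap)
      (LinearMap.id : B →ₗ[k] B) ∘ₗ
    (TensorProduct.assoc k (A ⊗[k] B) A B).symm.toLinearMap

/-- (a): `ψ ∘ (m_B ⊗ id_A) = (id_A ⊗ m_B) ∘ (ψ ⊗ id_B) ∘ (id_B ⊗ ψ)`. -/
def psiCondA (ψ : B ⊗[k] A →ₗ[k] A ⊗[k] B) : Prop :=
  ψ ∘ₗ TensorProduct.map (LinearMap.mul' k B) (LinearMap.id : A →ₗ[k] A) =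
    TensorProduct.map (LinearMap.id : A →ₗ[k] A) (LinearMap.mul' k B) ∘ₗ
      (TensorProduct.assoc k A B B).toLinearMap ∘ₗ
      TensorProduct.map ψ (LinearMap.id : B →ₗ[k] B) ∘ₗ
      (TensorProduct.assoc k B A B).symm.toLinearMap ∘ₗ
      TensorProduct.map (LinearMap.id : B →ₗ[k] B) ψ ∘ₗ
      (TensorProduct.assoc k B B A).toLinearMap

/-- (b): `ψ ∘ (id_B ⊗ m_A) = (m_A ⊗ id_B) ∘ (id_A ⊗ ψ) ∘ (ψ ⊗ id_A)`. -/
def psiCondB (ψ : B ⊗[k] A →ₗ[k] A ⊗[k] B) : Prop :=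
  ψ ∘ₗ TensorProduct.map (LinearMap.id : B →ₗ[k] B) (LinearMap.mul' k A) =
    TensorProduct.map (LinearMap.mul' k A) (LinearMap.id : B →ₗ[k] B) ∘ₗ
      (TensorProduct.assoc k A A B).symm.toLinearMap ∘ₗ
      TensorProduct.map (LinearMap.id : A →ₗ[k] A) ψ ∘ₗ
      (TensorProduct.assoc k A B A).toLinearMap ∘ₗ
      TensorProduct.map ψ (LinearMap.id : A →ₗ[k] A) ∘ₗ
      (TensorProduct.assoc k B A A).symm.toLinearMap

/-- (c): `ψ(b ⊗ 1_A) = 1_A ⊗ b`. -/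
def psiCondC (ψ : B ⊗[k] A →ₗ[k] A ⊗[k] B) : Prop :=
  ∀ b : B, ψ (b ⊗ₜ[k] (1 : A)) = (1 : A) ⊗ₜ[k] b

/-- (d): `ψ(1_B ⊗ a) = a ⊗ 1_B`. -/
def psiCondD (ψ : B ⊗[k] A →ₗ[k] A ⊗[k] B) : Prop :=
  ∀ a : A, ψ ((1 : B) ⊗ₜ[k] a) = a ⊗ₜ[k] (1 : B)

open LinearMap

lemma crossMul_tmul (ψ : B ⊗[k] A →ₗ[k] A ⊗[k] B) (a a' : A) (b b' : B) :
    crossMul ψ ((a ⊗ₜ[k] b) ⊗ₜ[k] (a' ⊗ₜ[k] b')) =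
      TensorProduct.map (mulLeft k a) (mulRight k b') (ψ (b ⊗ₜ[k] a')) := by
  simp only [crossMul, coe_comp, Function.comp_apply, LinearEquiv.coe_coe,
    assoc_symm_tmul, map_tmul, id_coe, id_eq, assoc_tmul]
  induction ψ (b ⊗ₜ[k] a') using TensorProduct.induction_on with
  | zero =>
      rw [tmul_zero, (TensorProduct.assoc k A A B).symm.map_zero, zero_tmul,
        (TensorProduct.assoc k (A ⊗[k] A) B B).map_zero]
      simp
  | tmul x y => simp [mul'_apply]
  | add u v hu hv =>
      rw [tmul_add, (TensorProduct.assoc k A A B).symm.map_add, add_tmul,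
        (TensorProduct.assoc k (A ⊗[k] A) B B).map_add, map_add, hu, hv, map_add]

/-- The "tail" of condition (a). -/
noncomputable def tailA (ψ : B ⊗[k] A →ₗ[k] A ⊗[k] B) :
    B ⊗[k] (A ⊗[k] B) →ₗ[k] A ⊗[k] B :=
  TensorProduct.map (LinearMap.id : A →ₗ[k] A) (LinearMap.mul' k B) ∘ₗ
    (TensorProduct.assoc k A B B).toLinearMap ∘ₗ
    TensorProduct.map ψ (LinearMap.id : B →ₗ[k] B) ∘ₗ
    (TensorProduct.assoc k B A B).symm.toLinearMap

/-- The "tail" of condition (b). -/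
noncomputable def tailB (ψ : B ⊗[k] A →ₗ[k] A ⊗[k] B) :
    (A ⊗[k] B) ⊗[k] A →ₗ[k] A ⊗[k] B :=
  TensorProduct.map (LinearMap.mul' k A) (LinearMap.id : B →ₗ[k] B) ∘ₗ
    (TensorProduct.assoc k A A B).symm.toLinearMap ∘ₗ
    TensorProduct.map (LinearMap.id : A →ₗ[k] A) ψ ∘ₗ
    (TensorProduct.assoc k A B A).toLinearMap

lemma tailA_tmul (ψ : B ⊗[k] A →ₗ[k] A ⊗[k] B) (b x : _) (y : B) :
    tailA ψ (b ⊗ₜ[k] (x ⊗ₜ[k] y)) =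
      TensorProduct.map (LinearMap.id : A →ₗ[k] A) (mulRight k y) (ψ (b ⊗ₜ[k] x)) := by
  simp only [tailA, coe_comp, Function.comp_apply, LinearEquiv.coe_coe,
    assoc_symm_tmul, map_tmul, id_coe, id_eq]
  induction ψ (b ⊗ₜ[k] x) using TensorProduct.induction_on with
  | zero =>
      rw [zero_tmul, (TensorProduct.assoc k A B B).map_zero]; simp
  | tmul p q => simp [mul'_apply]
  | add u v hu hv =>
      rw [add_tmul, (TensorProduct.assoc k A B B).map_add, map_add, hu, hv, map_add]

lemma tailB_tmul (ψ : B ⊗[k] A →ₗ[k] A ⊗[k] B) (x : A) (y : B) (a : A) :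
    tailB ψ ((x ⊗ₜ[k] y) ⊗ₜ[k] a) =
      TensorProduct.map (mulLeft k x) (LinearMap.id : B →ₗ[k] B) (ψ (y ⊗ₜ[k] a)) := by
  simp only [tailB, coe_comp, Function.comp_apply, LinearEquiv.coe_coe,
    assoc_tmul, map_tmul, id_coe, id_eq]
  induction ψ (y ⊗ₜ[k] a) using TensorProduct.induction_on with
  | zero =>
      rw [tmul_zero, (TensorProduct.assoc k A A B).symm.map_zero]; simp
  | tmul p q => simp [mul'_apply]
  | add u v hu hv =>
      rw [tmul_add, (TensorProduct.assoc k A A B).symm.map_add, map_add, hu, hv, map_add]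

lemma psiCondA_iff (ψ : B ⊗[k] A →ₗ[k] A ⊗[k] B) :
    psiCondA ψ ↔ ∀ (b₁ b₂ : B) (a : A),
      ψ ((b₁ * b₂) ⊗ₜ[k] a) = tailA ψ (b₁ ⊗ₜ[k] ψ (b₂ ⊗ₜ[k] a)) := by
  constructor
  · intro h b₁ b₂ a
    have := LinearMap.congr_fun h ((b₁ ⊗ₜ[k] b₂) ⊗ₜ[k] a)
    simpa [tailA, mul'_apply] using this
  · intro h
    apply TensorProduct.ext'
    intro x a
    induction x using TensorProduct.induction_on with
    | zero => rw [zero_tmul, map_zero, map_zero]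
    | tmul b₁ b₂ =>
        have := h b₁ b₂ a
        simpa [tailA, mul'_apply] using this
    | add u v hu hv => simp only [add_tmul, map_add, hu, hv]

lemma psiCondB_iff (ψ : B ⊗[k] A →ₗ[k] A ⊗[k] B) :
    psiCondB ψ ↔ ∀ (b : B) (a₁ a₂ : A),
      ψ (b ⊗ₜ[k] (a₁ * a₂)) = tailB ψ (ψ (b ⊗ₜ[k] a₁) ⊗ₜ[k] a₂) := by
  constructor
  · intro h b a₁ a₂
    have := LinearMap.congr_fun h (b ⊗ₜ[k] (a₁ ⊗ₜ[k] a₂))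
    simpa [tailB, mul'_apply] using this
  · intro h
    apply TensorProduct.ext'
    intro b x
    induction x using TensorProduct.induction_on with
    | zero => rw [tmul_zero, map_zero, map_zero]
    | tmul a₁ a₂ =>
        have := h b a₁ a₂
        simpa [tailB, mul'_apply] using this
    | add u v hu hv => simp only [tmul_add, map_add, hu, hv]

lemma crossMul_one_left (ψ : B ⊗[k] A →ₗ[k] A ⊗[k] B) (b : B) (s : A ⊗[k] B) :
    crossMul ψ (((1 : A) ⊗ₜ[k] b) ⊗ₜ[k] s) = tailA ψ (b ⊗ₜ[k] s) := by
  induction s using TensorProduct.induction_on with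
  | zero => simp
  | tmul x y => rw [crossMul_tmul, tailA_tmul, mulLeft_one]
  | add u v hu hv => simp only [tmul_add, map_add, hu, hv]

lemma crossMul_one_right (ψ : B ⊗[k] A →ₗ[k] A ⊗[k] B) (a : A) (t : A ⊗[k] B) :
    crossMul ψ (t ⊗ₜ[k] (a ⊗ₜ[k] (1 : B))) = tailB ψ (t ⊗ₜ[k] a) := by
  induction t using TensorProduct.induction_on with
  | zero => simp
  | tmul x y => rw [crossMul_tmul, tailB_tmul, mulRight_one]
  | add u v hu hv => simp only [add_tmul, map_add, hu, hv]


/-- the cross product multiplication on `A ⊗ B` is associative with unit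
`1_A ⊗ 1_B` if and only if the four conditions (a)–(d) hold. -/
theorem crossMul_assoc_unital_iff (ψ : B ⊗[k] A →ₗ[k] A ⊗[k] B) :
    ((∀ x y z : A ⊗[k] B,
        crossMul ψ (crossMul ψ (x ⊗ₜ[k] y) ⊗ₜ[k] z) =
          crossMul ψ (x ⊗ₜ[k] crossMul ψ (y ⊗ₜ[k] z))) ∧
      (∀ x : A ⊗[k] B, crossMul ψ (((1 : A) ⊗ₜ[k] (1 : B)) ⊗ₜ[k] x) = x) ∧
      (∀ x : A ⊗[k] B, crossMul ψ (x ⊗ₜ[k] ((1 : A) ⊗ₜ[k] (1 : B))) = x)) ↔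
    (psiCondA ψ ∧ psiCondB ψ ∧ psiCondC ψ ∧ psiCondD ψ) := by
  constructor
  · rintro ⟨h1, h2, h3⟩
    have hD : psiCondD ψ := by
      intro a
      have := h2 (a ⊗ₜ[k] (1 : B))
      rwa [crossMul_tmul, mulLeft_one, mulRight_one, TensorProduct.map_id, id_coe, id_eq]
        at this
    have hC : psiCondC ψ := by
      intro b
      have := h3 ((1 : A) ⊗ₜ[k] b)
      rwa [crossMul_tmul, mulLeft_one, mulRight_one, TensorProduct.map_id, id_coe, id_eq]
        at this
    have hA : psiCondA ψ := by
      rw [psiCondA_iff]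
      intro b₁ b₂ a
      have e := h1 ((1 : A) ⊗ₜ[k] b₁) ((1 : A) ⊗ₜ[k] b₂) (a ⊗ₜ[k] (1 : B))
      rw [crossMul_tmul ψ (1 : A) (1 : A) b₁ b₂, hC b₁, map_tmul, mulLeft_apply,
        mulRight_apply, one_mul, crossMul_tmul ψ (1 : A) a (b₁ * b₂) (1 : B),
        mulLeft_one, mulRight_one, TensorProduct.map_id, id_coe, id_eq,
        crossMul_tmul ψ (1 : A) a b₂ (1 : B), mulLeft_one, mulRight_one,
        TensorProduct.map_id, id_coe, id_eq, crossMul_one_left] at e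
      exact e
    have hB : psiCondB ψ := by
      rw [psiCondB_iff]
      intro b a₁ a₂
      have e := h1 ((1 : A) ⊗ₜ[k] b) (a₁ ⊗ₜ[k] (1 : B)) (a₂ ⊗ₜ[k] (1 : B))
      rw [crossMul_tmul ψ (1 : A) a₁ b (1 : B), mulLeft_one, mulRight_one,
        TensorProduct.map_id, id_coe, id_eq,
        crossMul_tmul ψ a₁ a₂ (1 : B) (1 : B), hD a₂, map_tmul, mulLeft_apply,
        mulRight_apply, one_mul, crossMul_tmul ψ (1 : A) (a₁ * a₂) b (1 : B),
        mulLeft_one, mulRight_one, TensorProduct.map_id, id_coe, id_eq,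
        crossMul_one_right] at e
      exact e.symm
    exact ⟨hA, hB, hC, hD⟩
  · rintro ⟨hA, hB, hC, hD⟩
    rw [psiCondA_iff] at hA
    rw [psiCondB_iff] at hB
    refine ⟨?_, ?_, ?_⟩
    · -- associativity
      have claimL : ∀ (a a'' : A) (b' b'' : B) (t : A ⊗[k] B),
          crossMul ψ
              ((TensorProduct.map (mulLeft k a) (mulRight k b') t) ⊗ₜ[k] (a'' ⊗ₜ[k] b'')) =
            TensorProduct.map (mulLeft k a) (mulRight k b'')
              (crossMul ψ (t ⊗ₜ[k] ψ (b' ⊗ₜ[k] a''))) := by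
        intro a a'' b' b'' t
        induction t using TensorProduct.induction_on with
        | zero => simp
        | tmul x y =>
            rw [map_tmul, mulLeft_apply, mulRight_apply, crossMul_tmul, hA y b' a'']
            induction ψ (b' ⊗ₜ[k] a'') using TensorProduct.induction_on with
            | zero => simp
            | tmul u v =>
                rw [tailA_tmul, crossMul_tmul]
                induction ψ (y ⊗ₜ[k] u) using TensorProduct.induction_on with
                | zero => simp
                | tmul p q =>
                    simp [mul'_apply, mul_assoc]
                | add w₁ w₂ hw₁ hw₂ => simp only [map_add, hw₁, hw₂]
            | add s₁ s₂ hs₁ hs₂ =>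
                rw [tmul_add, map_add, map_add, tmul_add, map_add, map_add, hs₁, hs₂]
        | add t₁ t₂ ht₁ ht₂ =>
            rw [map_add, add_tmul, map_add, ht₁, ht₂, add_tmul, map_add, map_add]
      have claimR : ∀ (a a' : A) (b b'' : B) (s : A ⊗[k] B),
          crossMul ψ
              ((a ⊗ₜ[k] b) ⊗ₜ[k] (TensorProduct.map (mulLeft k a') (mulRight k b'') s)) =
            TensorProduct.map (mulLeft k a) (mulRight k b'')
              (crossMul ψ (ψ (b ⊗ₜ[k] a') ⊗ₜ[k] s)) := by
        intro a a' b b'' s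
        induction s using TensorProduct.induction_on with
        | zero => simp
        | tmul u v =>
            rw [map_tmul, mulLeft_apply, mulRight_apply, crossMul_tmul, hB b a' u]
            induction ψ (b ⊗ₜ[k] a') using TensorProduct.induction_on with
            | zero => simp
            | tmul x y =>
                rw [tailB_tmul, crossMul_tmul]
                induction ψ (y ⊗ₜ[k] u) using TensorProduct.induction_on with
                | zero => simp
                | tmul p q =>
                    simp [mul'_apply, mul_assoc]
                | add w₁ w₂ hw₁ hw₂ => simp only [map_add, hw₁, hw₂]
            | add t₁ t₂ ht₁ ht₂ =>
                rw [add_tmul, map_add, map_add, add_tmul, map_add, map_add, ht₁, ht₂]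
        | add s₁ s₂ hs₁ hs₂ =>
            rw [map_add, tmul_add, map_add, hs₁, hs₂, tmul_add, map_add, map_add]
      intro x y z
      induction x using TensorProduct.induction_on with
      | zero => simp
      | tmul a b =>
          induction y using TensorProduct.induction_on with
          | zero => simp
          | tmul a' b' =>
              induction z using TensorProduct.induction_on with
              | zero => simp
              | tmul a'' b'' =>
                  rw [crossMul_tmul ψ a a' b b', crossMul_tmul ψ a' a'' b' b'',
                    claimL, claimR]
              | add z₁ z₂ hz₁ hz₂ =>
                  rw [tmul_add, map_add, tmul_add, map_add, tmul_add, map_add, hz₁, hz₂]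
          | add y₁ y₂ hy₁ hy₂ =>
              rw [tmul_add, map_add, add_tmul, map_add, add_tmul, map_add, tmul_add,
                map_add, hy₁, hy₂]
      | add x₁ x₂ hx₁ hx₂ =>
          rw [add_tmul, map_add, add_tmul, map_add, add_tmul, map_add, hx₁, hx₂]
    · intro x
      induction x using TensorProduct.induction_on with
      | zero => simp
      | tmul a b =>
          rw [crossMul_tmul, hD a, map_tmul, mulLeft_apply, mulRight_apply, one_mul,
            one_mul]
      | add u v hu hv => rw [tmul_add, map_add, hu, hv]
    · intro x
      induction x using TensorProduct.induction_on with
      | zero => simp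
      | tmul a b =>
          rw [crossMul_tmul, hC b, map_tmul, mulLeft_apply, mulRight_apply, mul_one,
            mul_one]
      | add u v hu hv => rw [add_tmul, map_add, hu, hv]
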